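/- arXiv:1802.04064 — 5 statements merged into one kernel-verified Lean document; each statement's English description precedes it below -/
import Mathlib

section
/- On any active ε-greedy trajectory for which event E holds, the actions given by the optimal policy are always explored: π*(x_t) ∈ A_t for all t ≥ 1. -/
open MeasureTheory Finset

namespace CB

/-- Data of an active ε-greedy trajectory: contexts, loss vectors, chosen actions,
empirical minimizers, constrained empirical minimizers, explored action sets and
sampling probabilities. -/
structure TrajData (K : ℕ) (X : Type*) where
  x : ℕ → X
  loss : ℕ → Fin K → ℝ
  act : ℕ → Fin K
  pit : ℕ → X → Fin K
  pita : ℕ → Fin K → X → Fin K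
  Aset : ℕ → Finset (Fin K)
  p : ℕ → Fin K → ℝ

variable {K : ℕ} {X : Type*}

/-- IPS loss estimate `ℓ̂_t(b)` with value 1 on unexplored actions. -/
noncomputable def TrajData.lhat (τ : TrajData K X) (t : ℕ) (b : Fin K) : ℝ :=
  if b ∈ τ.Aset t then (if b = τ.act t then τ.loss t (τ.act t) / τ.p t (τ.act t) else 0) else 1

/-- Biased loss `ℓ̃_t(b)` with value 1 on unexplored actions. -/
noncomputable def TrajData.ltilde (τ : TrajData K X) (t : ℕ) (b : Fin K) : ℝ :=
  if b ∈ τ.Aset t then τ.loss t b else 1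

/-- `L̂_T(π)`. -/
noncomputable def TrajData.Lhat (τ : TrajData K X) (T : ℕ) (π : X → Fin K) : ℝ :=
  (1 / (T : ℝ)) * ∑ t ∈ Finset.Icc 1 T, τ.lhat t (π (τ.x t))

/-- `L̃_T(π)`. -/
noncomputable def TrajData.Ltilde (τ : TrajData K X) (T : ℕ) (π : X → Fin K) : ℝ :=
  (1 / (T : ℝ)) * ∑ t ∈ Finset.Icc 1 T, τ.ltilde t (π (τ.x t))

/-- `L_T(π)`, the empirical loss on the true (unobserved) loss vectors. -/
noncomputable def TrajData.Lemp (τ : TrajData K X) (T : ℕ) (π : X → Fin K) : ℝ :=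
  (1 / (T : ℝ)) * ∑ t ∈ Finset.Icc 1 T, τ.loss t (π (τ.x t))

/-- `e_T = log(2|Π|(T²+T)/δ)/T`. -/
noncomputable def eBound (N : ℕ) (δ : ℝ) (T : ℕ) : ℝ :=
  Real.log (2 * N * ((T : ℝ) ^ 2 + T) / δ) / T

/-- `Δ_T = (√(2K/ε)+1)·√(e_{T−1}) + (K/ε+3)·e_{T−1}`. -/
noncomputable def Δbound (K : ℕ) (ε δ : ℝ) (N : ℕ) (T : ℕ) : ℝ :=
  (Real.sqrt (2 * K / ε) + 1) * Real.sqrt (eBound N δ (T - 1))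
    + ((K : ℝ) / ε + 3) * eBound N δ (T - 1)

/-- `Δ*_T(π)` expressed through `r = ρ(π,π*)`. -/
noncomputable def Δstar (K : ℕ) (ε δ : ℝ) (N : ℕ) (r : ℝ) (T : ℕ) : ℝ :=
  (Real.sqrt (2 * K / ε) + 1) * Real.sqrt (r * eBound N δ (T - 1))
    + ((K : ℝ) / ε + 3) * eBound N δ (T - 1)

/-- Population (expected) loss `L(π)`. -/
noncomputable def popLoss [MeasurableSpace X] (D : Measure (X × (Fin K → ℝ)))
    (π : X → Fin K) : ℝ :=
  ∫ z, z.2 (π z.1) ∂D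

/-- Expected disagreement `ρ(π,π') = P_x(π(x) ≠ π'(x))`. -/
noncomputable def disag [MeasurableSpace X] (D : Measure (X × (Fin K → ℝ)))
    (π π' : X → Fin K) : ℝ :=
  (D.map Prod.fst {x | π x ≠ π' x}).toReal

/-- The defining properties of an active ε-greedy trajectory. -/
def TrajData.IsValid (τ : TrajData K X) (P : Finset (X → Fin K)) (ε δ : ℝ) : Prop :=
  (∀ t b, τ.loss t b ∈ Set.Icc (0 : ℝ) 1) ∧
  (∀ t, 1 ≤ t → τ.pit t ∈ P ∧ ∀ π ∈ P, τ.Lhat (t - 1) (τ.pit t) ≤ τ.Lhat (t - 1) π) ∧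
  (∀ t, 1 ≤ t → ∀ b : Fin K, τ.pita t b ∈ P ∧ τ.pita t b (τ.x t) = b ∧
      ∀ π ∈ P, π (τ.x t) = b → τ.Lhat (t - 1) (τ.pita t b) ≤ τ.Lhat (t - 1) π) ∧
  (τ.Aset 1 = Finset.univ) ∧
  (∀ t, 2 ≤ t → ∀ b : Fin K, b ∈ τ.Aset t ↔
      τ.Lhat (t - 1) (τ.pita t b) - τ.Lhat (t - 1) (τ.pit t) ≤ Δbound K ε δ P.card t) ∧
  (∀ t, 1 ≤ t →
      τ.p t (τ.pit t (τ.x t)) = 1 - (((τ.Aset t).card : ℝ) - 1) * ε / K ∧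
      (∀ b ∈ τ.Aset t, b ≠ τ.pit t (τ.x t) → τ.p t b = ε / K) ∧
      (∀ b, b ∉ τ.Aset t → τ.p t b = 0)) ∧
  (∀ t, 1 ≤ t → 0 < τ.p t (τ.act t))

/-- Event `E`: the two deviation bounds hold simultaneously for all policies and horizons. -/
def TrajData.EventE [MeasurableSpace X] (τ : TrajData K X) (P : Finset (X → Fin K))
    (D : Measure (X × (Fin K → ℝ))) (pistar : X → Fin K) (ε δ : ℝ) : Prop :=
  ∀ π ∈ P, ∀ T : ℕ, 1 ≤ T →
    |(τ.Lhat T π - τ.Lhat T pistar) - (τ.Ltilde T π - τ.Ltilde T pistar)| ≤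
        Real.sqrt (2 * K * disag D π pistar * eBound P.card δ T / ε)
          + ((K : ℝ) / ε + 1) * eBound P.card δ T ∧
    |(τ.Lemp T π - τ.Lemp T pistar) - (popLoss D π - popLoss D pistar)| ≤
        Real.sqrt (disag D π pistar * eBound P.card δ T) + 2 * eBound P.card δ T


lemma eBound_nonneg {N : ℕ} (hN : 1 ≤ N) {δ : ℝ} (hδ0 : 0 < δ) (hδ1 : δ < 1)
    {T : ℕ} (hT : 1 ≤ T) : 0 ≤ eBound N δ T := by
  apply div_nonneg _ (Nat.cast_nonneg T)
  apply Real.log_nonneg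
  rw [le_div_iff₀ hδ0]
  have hN' : (1:ℝ) ≤ N := by exact_mod_cast hN
  have hT' : (1:ℝ) ≤ T := by exact_mod_cast hT
  nlinarith

lemma disag_nonneg [MeasurableSpace X] (D : Measure (X × (Fin K → ℝ)))
    (π π' : X → Fin K) : 0 ≤ disag D π π' := ENNReal.toReal_nonneg

lemma disag_le_one [MeasurableSpace X] (D : Measure (X × (Fin K → ℝ)))
    [IsProbabilityMeasure D] (π π' : X → Fin K) : disag D π π' ≤ 1 := by
  unfold disag
  have h1 : D.map Prod.fst {x | π x ≠ π' x} ≤ 1 := by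
    calc D.map Prod.fst {x | π x ≠ π' x} ≤ D.map Prod.fst Set.univ :=
          measure_mono (Set.subset_univ _)
      _ = 1 := by
          rw [Measure.map_apply measurable_fst MeasurableSet.univ]
          simp
  calc (D.map Prod.fst {x | π x ≠ π' x}).toReal ≤ (1 : ENNReal).toReal :=
        ENNReal.toReal_mono ENNReal.one_ne_top h1
    _ = 1 := by simp

lemma dev_sum_le (K : ℕ) (ε e ρ : ℝ) (hε : 0 < ε) (he : 0 ≤ e)
    (hρ0 : 0 ≤ ρ) (hρ1 : ρ ≤ 1) :
    Real.sqrt (2 * K * ρ * e / ε) + ((K : ℝ) / ε + 1) * e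
      + (Real.sqrt (ρ * e) + 2 * e)
      ≤ (Real.sqrt (2 * K / ε) + 1) * Real.sqrt e + ((K : ℝ) / ε + 3) * e := by
  have hKε : 0 ≤ 2 * (K : ℝ) / ε := by positivity
  have h1 : Real.sqrt (ρ * e) ≤ Real.sqrt e := by
    apply Real.sqrt_le_sqrt
    nlinarith
  have h2 : Real.sqrt (2 * K * ρ * e / ε) = Real.sqrt (2 * K / ε) * Real.sqrt (ρ * e) := by
    rw [← Real.sqrt_mul hKε]
    ring_nf
  have h3 : Real.sqrt (2 * K / ε) * Real.sqrt (ρ * e)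
      ≤ Real.sqrt (2 * K / ε) * Real.sqrt e :=
    mul_le_mul_of_nonneg_left h1 (Real.sqrt_nonneg _)
  rw [h2]
  nlinarith [Real.sqrt_nonneg e, Real.sqrt_nonneg (ρ * e)]

/-- On any active ε-greedy trajectory for which event `E` holds, the actions given by the
optimal policy are always explored: `π*(x_t) ∈ A_t` for all `t ≥ 1`. -/
theorem optimal_action_explored
    {X : Type*} [MeasurableSpace X] {K : ℕ} (hK : 2 ≤ K)
    (P : Finset (X → Fin K)) (hPne : P.Nonempty)
    (hPmeas : ∀ π ∈ P, Measurable π)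
    (D : Measure (X × (Fin K → ℝ))) [IsProbabilityMeasure D]
    (hD : ∀ᵐ z ∂D, ∀ b : Fin K, z.2 b ∈ Set.Icc (0 : ℝ) 1)
    {ε δ : ℝ} (hε : ε ∈ Set.Ioc (0 : ℝ) 1) (hδ : δ ∈ Set.Ioo (0 : ℝ) 1)
    (pistar : X → Fin K) (hstar : pistar ∈ P)
    (hstar_opt : ∀ π ∈ P, popLoss D pistar ≤ popLoss D π)
    (tr : TrajData K X) (htr : tr.IsValid P ε δ)
    (hE : tr.EventE P D pistar ε δ) :
    ∀ t : ℕ, 1 ≤ t → pistar (tr.x t) ∈ tr.Aset t := by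
  obtain ⟨hloss, hpit, hpita, hA1, hAt, hp, hpa⟩ := htr
  obtain ⟨hε0, hε1⟩ := hε
  obtain ⟨hδ0, hδ1⟩ := hδ
  have hN : 1 ≤ P.card := Finset.card_pos.mpr hPne
  intro t
  induction t using Nat.strong_induction_on with
  | _ t IH =>
    intro ht
    rcases ht.eq_or_lt with h1 | h2
    · subst h1
      rw [hA1]
      exact Finset.mem_univ _
    · -- 2 ≤ t
      have ht2 : 2 ≤ t := h2
      have ht1 : 1 ≤ t := ht
      set b := pistar (tr.x t) with hb
      rw [hAt t ht2 b]
      set T := t - 1 with hT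
      have hT1 : 1 ≤ T := by omega
      have hTt : T < t := by omega
      -- step 1 : constrained minimizer beats pistar
      obtain ⟨_, _, hb3⟩ := hpita t ht1 b
      have hstep1 : tr.Lhat T (tr.pita t b) ≤ tr.Lhat T pistar := hb3 pistar hstar rfl
      -- event E for pit t
      obtain ⟨hπmem, _⟩ := hpit t ht1
      obtain ⟨hE1, hE2⟩ := hE (tr.pit t) hπmem T hT1
      set e := eBound P.card δ T with he_def
      set ρ := disag D (tr.pit t) pistar with hρ_def
      have he : 0 ≤ e := eBound_nonneg hN hδ0 hδ1 hT1
      have hρ0 : 0 ≤ ρ := disag_nonneg D _ _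
      have hρ1 : ρ ≤ 1 := disag_le_one D _ _
      -- from first bound of E
      have hE1' : tr.Lhat T pistar - tr.Lhat T (tr.pit t)
          ≤ tr.Ltilde T pistar - tr.Ltilde T (tr.pit t)
            + (Real.sqrt (2 * K * ρ * e / ε) + ((K : ℝ) / ε + 1) * e) := by
        have := abs_le.mp hE1
        linarith [this.1]
      -- Ltilde pistar = Lemp pistar, by induction hypothesis
      have hTl : tr.Ltilde T pistar = tr.Lemp T pistar := by
        unfold TrajData.Ltilde TrajData.Lemp
        congr 1
        apply Finset.sum_congr rfl
        intro s hs
        rw [Finset.mem_Icc] at hs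
        have hmem : pistar (tr.x s) ∈ tr.Aset s := IH s (lt_of_le_of_lt hs.2 hTt) hs.1
        unfold TrajData.ltilde
        rw [if_pos hmem]
      -- Ltilde ≥ Lemp for pit t
      have hTl2 : tr.Lemp T (tr.pit t) ≤ tr.Ltilde T (tr.pit t) := by
        unfold TrajData.Ltilde TrajData.Lemp
        apply mul_le_mul_of_nonneg_left _ (by positivity)
        apply Finset.sum_le_sum
        intro s _
        unfold TrajData.ltilde
        by_cases hmem : tr.pit t (tr.x s) ∈ tr.Aset s
        · rw [if_pos hmem]
        · rw [if_neg hmem]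
          exact (hloss s _).2
      -- from second bound of E plus optimality of pistar
      have hE2' : tr.Lemp T pistar - tr.Lemp T (tr.pit t)
          ≤ Real.sqrt (ρ * e) + 2 * e := by
        have h := abs_le.mp hE2
        have hopt := hstar_opt (tr.pit t) hπmem
        linarith [h.1]
      have hdev := dev_sum_le K ε e ρ hε0 he hρ0 hρ1
      have hΔ : Δbound K ε δ P.card t
          = (Real.sqrt (2 * K / ε) + 1) * Real.sqrt e + ((K : ℝ) / ε + 3) * e := rfl
      rw [hΔ]
      linarith

end CB
end

section
/- On any active ε-greedy trajectory for which event E holds, assume there is τ > 0 such that L(π) − L(π*) ≥ τ for every π ∈ Π with π ≠ π*. Then for every round t ≥ 2 with 2Δ_t < τ: A_t = {π*(x_t)}, π_t(x_t) = π*(x_t), and consequently the action played satisfies a_t = π*(x_t). -/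
open MeasureTheory Finset

namespace CB

variable {K : ℕ} {X : Type*}

/-- On any active ε-greedy trajectory for which event `E` holds, if every suboptimal policy
has expected loss at least `τ` above that of `π*`, then at every round `t ≥ 2` with
`2Δ_t < τ`, the explored set is exactly `{π*(x_t)}`, the empirical minimizer picks
`π*(x_t)`, and the played action is `a_t = π*(x_t)`. -/
theorem gap_implies_no_exploration
    {X : Type*} [MeasurableSpace X] {K : ℕ} (hK : 2 ≤ K)
    (P : Finset (X → Fin K)) (hPne : P.Nonempty)
    (hPmeas : ∀ π ∈ P, Measurable π)
    (D : Measure (X × (Fin K → ℝ))) [IsProbabilityMeasure D]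
    (hD : ∀ᵐ z ∂D, ∀ b : Fin K, z.2 b ∈ Set.Icc (0 : ℝ) 1)
    {ε δ : ℝ} (hε : ε ∈ Set.Ioc (0 : ℝ) 1) (hδ : δ ∈ Set.Ioo (0 : ℝ) 1)
    (pistar : X → Fin K) (hstar : pistar ∈ P)
    (hstar_opt : ∀ π ∈ P, popLoss D pistar ≤ popLoss D π)
    (tr : TrajData K X) (htr : tr.IsValid P ε δ)
    (hE : tr.EventE P D pistar ε δ)
    (τgap : ℝ) (hτ : 0 < τgap)
    (hgap : ∀ π ∈ P, π ≠ pistar → τgap ≤ popLoss D π - popLoss D pistar) :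
    ∀ t : ℕ, 2 ≤ t → 2 * Δbound K ε δ P.card t < τgap →
      tr.Aset t = {pistar (tr.x t)} ∧
      tr.pit t (tr.x t) = pistar (tr.x t) ∧
      tr.act t = pistar (tr.x t) := by
  obtain ⟨hloss, hpit, hpita, hA1, hAiff, hp, hppos⟩ := htr
  have hε0 : (0:ℝ) < ε := hε.1
  have hNpos : (1:ℝ) ≤ (P.card : ℝ) := by exact_mod_cast hPne.card_pos
  have hK0 : (0:ℝ) ≤ (K:ℝ) := Nat.cast_nonneg K
  have he : ∀ T : ℕ, 1 ≤ T → 0 ≤ eBound P.card δ T := by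
    intro T hT
    have hT1 : (1:ℝ) ≤ (T:ℝ) := by exact_mod_cast hT
    apply div_nonneg _ (by positivity)
    apply Real.log_nonneg
    rw [le_div_iff₀ hδ.1]
    nlinarith [hδ.2.le]
  haveI : IsProbabilityMeasure (D.map Prod.fst) :=
    Measure.isProbabilityMeasure_map measurable_fst.aemeasurable
  have hρ0 : ∀ π : X → Fin K, 0 ≤ disag D π pistar := fun π => ENNReal.toReal_nonneg
  have hρ1 : ∀ π : X → Fin K, disag D π pistar ≤ 1 := by
    intro π
    have h := prob_le_one (μ := D.map Prod.fst) (s := {x | π x ≠ pistar x})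
    calc disag D π pistar ≤ (1:ENNReal).toReal := ENNReal.toReal_mono ENNReal.one_ne_top h
      _ = 1 := by simp
  -- the key deviation bound under event E, assuming π* was never eliminated up to T
  have key : ∀ T : ℕ, 1 ≤ T → (∀ s, 1 ≤ s → s ≤ T → pistar (tr.x s) ∈ tr.Aset s) →
      ∀ π ∈ P, (popLoss D π - popLoss D pistar) - Δbound K ε δ P.card (T+1)
        ≤ tr.Lhat T π - tr.Lhat T pistar := by
    intro T hT hA π hπ
    obtain ⟨h1, h2⟩ := hE π hπ T hT
    have he' : 0 ≤ eBound P.card δ T := he T hT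
    have hstep : tr.Lemp T π - tr.Lemp T pistar ≤ tr.Ltilde T π - tr.Ltilde T pistar := by
      unfold TrajData.Lemp TrajData.Ltilde
      rw [← mul_sub, ← mul_sub, ← Finset.sum_sub_distrib, ← Finset.sum_sub_distrib]
      have hTpos : (0:ℝ) ≤ 1 / (T:ℝ) := by positivity
      apply mul_le_mul_of_nonneg_left _ hTpos
      apply Finset.sum_le_sum
      intro s hs
      rw [Finset.mem_Icc] at hs
      have hmem := hA s hs.1 hs.2
      have heq : tr.ltilde s (pistar (tr.x s)) = tr.loss s (pistar (tr.x s)) := if_pos hmem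
      have hge : tr.loss s (π (tr.x s)) ≤ tr.ltilde s (π (tr.x s)) := by
        unfold TrajData.ltilde
        split
        · exact le_rfl
        · exact (hloss s _).2
      linarith
    set r := disag D π pistar with hrdef
    set e := eBound P.card δ T with hedef
    have hΔeq : Δbound K ε δ P.card (T+1)
        = (Real.sqrt (2*K/ε) + 1) * Real.sqrt e + ((K:ℝ)/ε + 3) * e := by
      simp [Δbound, hedef]
    have hs1 : Real.sqrt (r * e) ≤ Real.sqrt e :=
      Real.sqrt_le_sqrt (by nlinarith [hρ1 π, hρ0 π])
    have hs2 : Real.sqrt (2 * (K:ℝ) * r * e / ε) ≤ Real.sqrt (2*(K:ℝ)/ε) * Real.sqrt e := by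
      rw [← Real.sqrt_mul (by positivity) e]
      apply Real.sqrt_le_sqrt
      rw [div_mul_eq_mul_div]
      rw [div_le_div_iff₀ hε0 hε0]
      have h2Ke : (0:ℝ) ≤ 2*(K:ℝ)*e*ε :=
        mul_nonneg (mul_nonneg (mul_nonneg (by norm_num) hK0) he') hε0.le
      nlinarith [mul_nonneg (sub_nonneg.mpr (hρ1 π)) h2Ke]
    have ha1 := (abs_le.mp h1).1
    have ha2 := (abs_le.mp h2).1
    have hsqe := Real.sqrt_nonneg e
    rw [hΔeq]
    nlinarith [hs1, hs2]
  -- π* is never eliminated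
  have hB : ∀ t : ℕ, 1 ≤ t → pistar (tr.x t) ∈ tr.Aset t := by
    intro t
    induction t using Nat.strong_induction_on with
    | _ t IH =>
      intro ht
      rcases eq_or_lt_of_le ht with h1 | h2
      · rw [← h1, hA1]; exact Finset.mem_univ _
      · have ht2 : 2 ≤ t := h2
        obtain ⟨T, rfl⟩ : ∃ T, t = T + 1 := ⟨t - 1, by omega⟩
        have hT1 : 1 ≤ T := by omega
        have hAprev : ∀ s, 1 ≤ s → s ≤ T → pistar (tr.x s) ∈ tr.Aset s :=
          fun s hs1 hs2 => IH s (by omega) hs1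
        have hkey := key T hT1 hAprev (tr.pit (T+1)) (hpit (T+1) (by omega)).1
        have hopt := hstar_opt _ (hpit (T+1) (by omega)).1
        have hmin3 := (hpita (T+1) (by omega) (pistar (tr.x (T+1)))).2.2 pistar hstar rfl
        rw [hAiff (T+1) (by omega)]
        simp only [Nat.add_sub_cancel] at hmin3 ⊢
        linarith
  intro t ht2 hΔτ
  obtain ⟨T, rfl⟩ : ∃ T, t = T + 1 := ⟨t - 1, by omega⟩
  have hT1 : 1 ≤ T := by omega
  have ht1 : 1 ≤ T + 1 := by omega
  have hAprev : ∀ s, 1 ≤ s → s ≤ T → pistar (tr.x s) ∈ tr.Aset s :=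
    fun s hs1 _ => hB s hs1
  have hΔ0 : 0 ≤ Δbound K ε δ P.card (T+1) := by
    simp only [Δbound, Nat.add_sub_cancel]
    have h1 : (0:ℝ) ≤ Real.sqrt (2*K/ε) + 1 := by positivity
    have h2 : (0:ℝ) ≤ (K:ℝ)/ε + 3 :=
      add_nonneg (div_nonneg hK0 hε0.le) (by norm_num)
    exact add_nonneg (mul_nonneg h1 (Real.sqrt_nonneg _)) (mul_nonneg h2 (he T hT1))
  have hmin : tr.Lhat T (tr.pit (T+1)) ≤ tr.Lhat T pistar := by
    have := (hpit (T+1) ht1).2 pistar hstar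
    simpa using this
  -- every member of A_{T+1} equals π*(x_{T+1})
  have hAsub : ∀ b : Fin K, b ∈ tr.Aset (T+1) → b = pistar (tr.x (T+1)) := by
    intro b hb
    by_contra hne
    have hval := (hAiff (T+1) (by omega) b).mp hb
    simp only [Nat.add_sub_cancel] at hval
    obtain ⟨hπP, hπb, _⟩ := hpita (T+1) ht1 b
    have hne' : tr.pita (T+1) b ≠ pistar := by
      intro h
      exact hne (by rw [← hπb, h])
    have hgapπ := hgap _ hπP hne'
    have hkeyπ := key T hT1 hAprev _ hπP
    linarith
  have hAeq : tr.Aset (T+1) = {pistar (tr.x (T+1))} := by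
    apply Finset.ext
    intro b
    simp only [Finset.mem_singleton]
    constructor
    · exact hAsub b
    · rintro rfl; exact hB (T+1) ht1
  have hpitmem : tr.pit (T+1) (tr.x (T+1)) ∈ tr.Aset (T+1) := by
    rw [hAiff (T+1) (by omega)]
    have hmin4 := (hpita (T+1) ht1 (tr.pit (T+1) (tr.x (T+1)))).2.2
      (tr.pit (T+1)) (hpit (T+1) ht1).1 rfl
    simp only [Nat.add_sub_cancel] at hmin4 ⊢
    linarith
  have hpiteq : tr.pit (T+1) (tr.x (T+1)) = pistar (tr.x (T+1)) := hAsub _ hpitmem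
  refine ⟨hAeq, hpiteq, ?_⟩
  have hpa := hppos (T+1) ht1
  have hactmem : tr.act (T+1) ∈ tr.Aset (T+1) := by
    by_contra h
    rw [(hp (T+1) ht1).2.2 _ h] at hpa
    exact lt_irrefl 0 hpa
  exact hAsub _ hactmem

end CB
end

section
/- On any active ε-greedy trajectory for which event E holds and the Massart noise condition with parameter τ > 0 holds, for every round t ≥ 2 and every action a ∈ A_t with a ≠ π*(x_t), the context x_t lies in the disagreement region DIS(2Δ_t/τ). -/
open MeasureTheory Finset

namespace CB

variable {K : ℕ} {X : Type*}

lemma sqrt_arith {K : ℕ} (hK : 0 < K) {ε e ρ : ℝ} (hε : 0 < ε) (he : 0 ≤ e)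
    (hρ0 : 0 ≤ ρ) (hρ1 : ρ ≤ 1) :
    Real.sqrt (2 * K * ρ * e / ε) + ((K : ℝ) / ε + 1) * e
      + (Real.sqrt (ρ * e) + 2 * e)
      ≤ (Real.sqrt (2 * K / ε) + 1) * Real.sqrt e + ((K : ℝ) / ε + 3) * e := by
  have h1 : Real.sqrt (2 * K * ρ * e / ε) ≤ Real.sqrt (2 * K / ε) * Real.sqrt e := by
    rw [← Real.sqrt_mul (by positivity)]
    apply Real.sqrt_le_sqrt
    rw [div_mul_eq_mul_div, div_le_div_iff_of_pos_right hε]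
    nlinarith [mul_nonneg (mul_nonneg (by positivity : (0:ℝ) ≤ 2*(K:ℝ)) he)
      (sub_nonneg.mpr hρ1)]
  have h2 : Real.sqrt (ρ * e) ≤ Real.sqrt e := by
    apply Real.sqrt_le_sqrt; nlinarith
  nlinarith [h1, h2]

/-- On any active ε-greedy trajectory for which event `E` holds and the Massart noise
condition with parameter `τ > 0` holds, for every round `t ≥ 2` and every explored action
`a ∈ A_t` with `a ≠ π*(x_t)`, the context `x_t` lies in the disagreement region
`DIS(2Δ_t/τ) = {x : ∃ π ∈ Π, ρ(π,π*) ≤ 2Δ_t/τ and π(x) ≠ π*(x)}`. -/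
theorem explored_context_in_disagreement_region
    {X : Type*} [MeasurableSpace X] {K : ℕ} (hK : 2 ≤ K)
    (P : Finset (X → Fin K)) (hPne : P.Nonempty)
    (hPmeas : ∀ π ∈ P, Measurable π)
    (D : Measure (X × (Fin K → ℝ))) [IsProbabilityMeasure D]
    (hD : ∀ᵐ z ∂D, ∀ b : Fin K, z.2 b ∈ Set.Icc (0 : ℝ) 1)
    {ε δ : ℝ} (hε : ε ∈ Set.Ioc (0 : ℝ) 1) (hδ : δ ∈ Set.Ioo (0 : ℝ) 1)
    (pistar : X → Fin K) (hstar : pistar ∈ P)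
    (hstar_opt : ∀ π ∈ P, popLoss D pistar ≤ popLoss D π)
    (τM : ℝ) (hτ : 0 < τM)
    (hmassart : ∀ π ∈ P, disag D π pistar ≤ (popLoss D π - popLoss D pistar) / τM)
    (tr : TrajData K X) (htr : tr.IsValid P ε δ)
    (hE : tr.EventE P D pistar ε δ) :
    ∀ t : ℕ, 2 ≤ t → ∀ a : Fin K, a ∈ tr.Aset t → a ≠ pistar (tr.x t) →
      ∃ π ∈ P, disag D π pistar ≤ 2 * Δbound K ε δ P.card t / τM ∧
        π (tr.x t) ≠ pistar (tr.x t) := by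
  obtain ⟨hε0, hε1⟩ := hε
  obtain ⟨hδ0, hδ1⟩ := hδ
  obtain ⟨hloss, hpit, hpita, hA1, hAset, -, -⟩ := htr
  have hKpos : 0 < K := by omega
  have hN : 1 ≤ P.card := Finset.card_pos.mpr hPne
  have hd0 : ∀ π : X → Fin K, 0 ≤ disag D π pistar := fun π => ENNReal.toReal_nonneg
  have hd1 : ∀ π : X → Fin K, disag D π pistar ≤ 1 := by
    intro π
    have h : (D.map Prod.fst) {x | π x ≠ pistar x} ≤ 1 := by
      calc (D.map Prod.fst) {x | π x ≠ pistar x} ≤ (D.map Prod.fst) Set.univ :=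
            measure_mono (Set.subset_univ _)
        _ = 1 := by rw [Measure.map_apply measurable_fst MeasurableSet.univ]; simp
    simpa [disag] using ENNReal.toReal_mono ENNReal.one_ne_top h
  have hEmp_le : ∀ (T : ℕ) (π : X → Fin K), tr.Lemp T π ≤ tr.Ltilde T π := by
    intro T π
    unfold TrajData.Lemp TrajData.Ltilde
    apply mul_le_mul_of_nonneg_left _ (by positivity)
    apply Finset.sum_le_sum
    intro s _
    unfold TrajData.ltilde
    split
    · exact le_refl _
    · exact (hloss s _).2
  have hstar_eq : ∀ T : ℕ, (∀ s, 1 ≤ s → s ≤ T → pistar (tr.x s) ∈ tr.Aset s) →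
      tr.Ltilde T pistar = tr.Lemp T pistar := by
    intro T h
    unfold TrajData.Ltilde TrajData.Lemp
    congr 1
    apply Finset.sum_congr rfl
    intro s hs
    rw [Finset.mem_Icc] at hs
    unfold TrajData.ltilde
    rw [if_pos (h s hs.1 hs.2)]
  -- π* is never eliminated
  have hstarA : ∀ t : ℕ, 1 ≤ t → pistar (tr.x t) ∈ tr.Aset t := by
    intro t
    induction t using Nat.strong_induction_on with
    | _ t IH =>
      intro ht1
      rcases eq_or_lt_of_le ht1 with h1 | h2
      · rw [← h1, hA1]; exact Finset.mem_univ _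
      · have ht2 : 2 ≤ t := h2
        have hT1 : 1 ≤ t - 1 := by omega
        have he : 0 ≤ eBound P.card δ (t - 1) := eBound_nonneg hN hδ0 hδ1 hT1
        have hπP := (hpit t ht1).1
        obtain ⟨hE1, hE2⟩ := hE (tr.pit t) hπP (t - 1) hT1
        rw [abs_le] at hE1 hE2
        have hst : tr.Ltilde (t - 1) pistar = tr.Lemp (t - 1) pistar :=
          hstar_eq (t - 1) (fun s hs1 hs2 => IH s (by omega) hs1)
        have h3 : tr.Lemp (t - 1) (tr.pit t) ≤ tr.Ltilde (t - 1) (tr.pit t) := hEmp_le _ _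
        have h4 : popLoss D pistar - popLoss D (tr.pit t) ≤ 0 :=
          sub_nonpos.mpr (hstar_opt _ hπP)
        have harith := sqrt_arith hKpos hε0 he (hd0 (tr.pit t)) (hd1 (tr.pit t))
        have hΔeq : Δbound K ε δ P.card t =
            (Real.sqrt (2 * K / ε) + 1) * Real.sqrt (eBound P.card δ (t - 1))
              + ((K : ℝ) / ε + 3) * eBound P.card δ (t - 1) := rfl
        have key : tr.Lhat (t - 1) pistar - tr.Lhat (t - 1) (tr.pit t)
            ≤ Δbound K ε δ P.card t := by
          rw [hΔeq]
          linarith [hE1.1, hE2.1]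
        rw [hAset t ht2]
        have h5 := (hpita t ht1 (pistar (tr.x t))).2.2 pistar hstar rfl
        linarith
  -- main conclusion
  intro t ht2 a haA hane
  have ht1 : 1 ≤ t := by omega
  have hT1 : 1 ≤ t - 1 := by omega
  have he : 0 ≤ eBound P.card δ (t - 1) := eBound_nonneg hN hδ0 hδ1 hT1
  obtain ⟨hπP, hπx, hπmin⟩ := hpita t ht1 a
  refine ⟨tr.pita t a, hπP, ?_, by rw [hπx]; exact hane⟩
  obtain ⟨hE1, hE2⟩ := hE (tr.pita t a) hπP (t - 1) hT1
  rw [abs_le] at hE1 hE2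
  have h1 : tr.Lhat (t - 1) (tr.pita t a) - tr.Lhat (t - 1) (tr.pit t)
      ≤ Δbound K ε δ P.card t := (hAset t ht2 a).mp haA
  have h2 : tr.Lhat (t - 1) (tr.pit t) ≤ tr.Lhat (t - 1) pistar :=
    (hpit t ht1).2 pistar hstar
  have hst : tr.Ltilde (t - 1) pistar = tr.Lemp (t - 1) pistar :=
    hstar_eq (t - 1) (fun s hs1 _ => hstarA s hs1)
  have h3 : tr.Lemp (t - 1) (tr.pita t a) ≤ tr.Ltilde (t - 1) (tr.pita t a) := hEmp_le _ _
  have harith := sqrt_arith hKpos hε0 he (hd0 (tr.pita t a)) (hd1 (tr.pita t a))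
  have hΔeq : Δbound K ε δ P.card t =
      (Real.sqrt (2 * K / ε) + 1) * Real.sqrt (eBound P.card δ (t - 1))
        + ((K : ℝ) / ε + 3) * eBound P.card δ (t - 1) := rfl
  have hpop : popLoss D (tr.pita t a) - popLoss D pistar ≤ 2 * Δbound K ε δ P.card t := by
    rw [hΔeq] at h1 ⊢
    linarith [hE1.1, hE2.1]
  calc disag D (tr.pita t a) pistar
      ≤ (popLoss D (tr.pita t a) - popLoss D pistar) / τM := hmassart _ hπP
    _ ≤ 2 * Δbound K ε δ P.card t / τM := by gcongr


end CB
end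

section
/- On any active ε-greedy trajectory for which event E holds, for every round t ≥ 2 and every action a ∈ A_t, the constrained empirical minimizer satisfies L(π_{t,a}) − L(π*) ≤ 2Δ_t. -/
open MeasureTheory Finset

namespace CB

variable {K : ℕ} {X : Type*}

/-- On any active ε-greedy trajectory for which event `E` holds, for every round `t ≥ 2`
and every explored action `a ∈ A_t`, the constrained empirical minimizer satisfies
`L(π_{t,a}) − L(π*) ≤ 2Δ_t`. -/
theorem constrained_minimizer_loss_bound
    {X : Type*} [MeasurableSpace X] {K : ℕ} (hK : 2 ≤ K)
    (P : Finset (X → Fin K)) (hPne : P.Nonempty)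
    (hPmeas : ∀ π ∈ P, Measurable π)
    (D : Measure (X × (Fin K → ℝ))) [IsProbabilityMeasure D]
    (hD : ∀ᵐ z ∂D, ∀ b : Fin K, z.2 b ∈ Set.Icc (0 : ℝ) 1)
    {ε δ : ℝ} (hε : ε ∈ Set.Ioc (0 : ℝ) 1) (hδ : δ ∈ Set.Ioo (0 : ℝ) 1)
    (pistar : X → Fin K) (hstar : pistar ∈ P)
    (hstar_opt : ∀ π ∈ P, popLoss D pistar ≤ popLoss D π)
    (tr : TrajData K X) (htr : tr.IsValid P ε δ)
    (hE : tr.EventE P D pistar ε δ) :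
    ∀ t : ℕ, 2 ≤ t → ∀ a : Fin K, a ∈ tr.Aset t →
      popLoss D (tr.pita t a) - popLoss D pistar ≤ 2 * Δbound K ε δ P.card t := by
  obtain ⟨hloss, hpit, hpita, hA1, hAt, hp, hpt⟩ := htr
  have hε0 : 0 < ε := hε.1
  have hNcard : 1 ≤ P.card := hPne.card_pos
  have heP : ∀ T : ℕ, 1 ≤ T → 0 ≤ eBound P.card δ T := by
    intro T hT
    unfold eBound
    apply div_nonneg _ (by positivity)
    apply Real.log_nonneg
    rw [le_div_iff₀ hδ.1]
    have hc1 : (1:ℝ) ≤ P.card := by exact_mod_cast hNcard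
    have hc2 : (1:ℝ) ≤ T := by exact_mod_cast hT
    nlinarith [hδ.2.le]
  have key : ∀ π ∈ P, ∀ T : ℕ, 1 ≤ T →
      (∀ r, 1 ≤ r → r ≤ T → pistar (tr.x r) ∈ tr.Aset r) →
      (popLoss D π - popLoss D pistar ≤ (tr.Lhat T π - tr.Lhat T pistar)
        + ((Real.sqrt (2 * K / ε) + 1) * Real.sqrt (eBound P.card δ T)
          + ((K : ℝ) / ε + 3) * eBound P.card δ T)) ∧
      (tr.Lhat T pistar - tr.Lhat T π ≤ (popLoss D pistar - popLoss D π)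
        + ((Real.sqrt (2 * K / ε) + 1) * Real.sqrt (eBound P.card δ T)
          + ((K : ℝ) / ε + 3) * eBound P.card δ T)) := by
    intro π hπ T hT hrs
    obtain ⟨h1, h2⟩ := hE π hπ T hT
    have he : 0 ≤ eBound P.card δ T := heP T hT
    have hρ0 : 0 ≤ disag D π pistar := ENNReal.toReal_nonneg
    have hρ1 : disag D π pistar ≤ 1 := by
      have hprob : IsProbabilityMeasure (D.map (Prod.fst : X × (Fin K → ℝ) → X)) :=
        Measure.isProbabilityMeasure_map measurable_fst.aemeasurable
      have hle1 := prob_le_one (μ := D.map (Prod.fst : X × (Fin K → ℝ) → X))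
        (s := {x | π x ≠ pistar x})
      have h2 := ENNReal.toReal_mono ENNReal.one_ne_top hle1
      simpa [disag] using h2
    have hs1 : Real.sqrt (2 * K * disag D π pistar * eBound P.card δ T / ε)
        ≤ Real.sqrt (2 * K / ε) * Real.sqrt (eBound P.card δ T) := by
      rw [show 2 * (K:ℝ) * disag D π pistar * eBound P.card δ T / ε
          = (2 * K / ε) * (disag D π pistar * eBound P.card δ T) by ring,
        Real.sqrt_mul (by positivity)]
      exact mul_le_mul_of_nonneg_left
        (Real.sqrt_le_sqrt (by nlinarith)) (Real.sqrt_nonneg _)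
    have hs2 : Real.sqrt (disag D π pistar * eBound P.card δ T)
        ≤ Real.sqrt (eBound P.card δ T) :=
      Real.sqrt_le_sqrt (by nlinarith)
    have hTinv : (0:ℝ) ≤ 1 / T := by positivity
    have hle : tr.Lemp T π ≤ tr.Ltilde T π := by
      unfold TrajData.Lemp TrajData.Ltilde
      refine mul_le_mul_of_nonneg_left (Finset.sum_le_sum fun r _ => ?_) hTinv
      unfold TrajData.ltilde
      split_ifs with h
      · exact le_refl _
      · exact (hloss r _).2
    have heq : tr.Ltilde T pistar = tr.Lemp T pistar := by
      unfold TrajData.Lemp TrajData.Ltilde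
      congr 1
      refine Finset.sum_congr rfl fun r hr => ?_
      rw [Finset.mem_Icc] at hr
      unfold TrajData.ltilde
      rw [if_pos (hrs r hr.1 hr.2)]
    rw [abs_le] at h1 h2
    constructor <;> nlinarith [h1.1, h1.2, h2.1, h2.2, Real.sqrt_nonneg (2*(K:ℝ)/ε)]
  have hstar_in : ∀ s, 1 ≤ s → pistar (tr.x s) ∈ tr.Aset s := by
    intro s
    induction s using Nat.strong_induction_on with
    | _ s ih =>
      intro hs1
      rcases eq_or_lt_of_le hs1 with heq1 | hs2
      · rw [← heq1, hA1]; exact Finset.mem_univ _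
      · have hs2' : 2 ≤ s := hs2
        rw [hAt s hs2' _]
        obtain ⟨_, _, hmin⟩ := hpita s (by omega) (pistar (tr.x s))
        have ha1 : tr.Lhat (s-1) (tr.pita s (pistar (tr.x s))) ≤ tr.Lhat (s-1) pistar :=
          hmin pistar hstar rfl
        obtain ⟨hpm, hpmin⟩ := hpit s (by omega)
        have hk := (key (tr.pit s) hpm (s-1) (by omega)
          (fun r hr hr' => ih r (by omega) hr)).2
        have hopt := hstar_opt (tr.pit s) hpm
        have hΔ : Δbound K ε δ P.card s
            = (Real.sqrt (2 * K / ε) + 1) * Real.sqrt (eBound P.card δ (s-1))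
              + ((K : ℝ) / ε + 3) * eBound P.card δ (s-1) := rfl
        linarith
  intro t ht a ha
  obtain ⟨hmem, _, _⟩ := hpita t (by omega) a
  have h2 := (hAt t ht a).mp ha
  obtain ⟨hpm, hpmin⟩ := hpit t (by omega)
  have h3 : tr.Lhat (t-1) (tr.pit t) ≤ tr.Lhat (t-1) pistar := hpmin pistar hstar
  have hk := (key (tr.pita t a) hmem (t-1) (by omega)
    (fun r hr _ => hstar_in r hr)).1
  have hΔ : Δbound K ε δ P.card t
      = (Real.sqrt (2 * K / ε) + 1) * Real.sqrt (eBound P.card δ (t-1))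
        + ((K : ℝ) / ε + 3) * eBound P.card δ (t-1) := rfl
  linarith


end CB
end

section
/- On any active ε-greedy trajectory for which event E holds and π*(x_s) ∈ A_s for all s ≤ T−1 (for some T ≥ 2), every policy π ∈ Π satisfies L̂_{T−1}(π) − L̂_{T−1}(π*) ≥ L(π) − L(π*) − Δ*_T(π). -/
open MeasureTheory Finset

namespace CB

variable {K : ℕ} {X : Type*}

/-- On any active ε-greedy trajectory for which event `E` holds and on which
`π*(x_s) ∈ A_s` for all `s ≤ T−1` (for some `T ≥ 2`), every policy `π ∈ Π` satisfies
`L̂_{T−1}(π) − L̂_{T−1}(π*) ≥ L(π) − L(π*) − Δ*_T(π)`. -/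
theorem empirical_loss_lower_bound
    {X : Type*} [MeasurableSpace X] {K : ℕ} (hK : 2 ≤ K)
    (P : Finset (X → Fin K)) (hPne : P.Nonempty)
    (hPmeas : ∀ π ∈ P, Measurable π)
    (D : Measure (X × (Fin K → ℝ))) [IsProbabilityMeasure D]
    (hD : ∀ᵐ z ∂D, ∀ b : Fin K, z.2 b ∈ Set.Icc (0 : ℝ) 1)
    {ε δ : ℝ} (hε : ε ∈ Set.Ioc (0 : ℝ) 1) (hδ : δ ∈ Set.Ioo (0 : ℝ) 1)
    (pistar : X → Fin K) (hstar : pistar ∈ P)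
    (hstar_opt : ∀ π ∈ P, popLoss D pistar ≤ popLoss D π)
    (tr : TrajData K X) (htr : tr.IsValid P ε δ)
    (hE : tr.EventE P D pistar ε δ)
    (T : ℕ) (hT : 2 ≤ T)
    (hexp : ∀ s : ℕ, 1 ≤ s → s ≤ T - 1 → pistar (tr.x s) ∈ tr.Aset s) :
    ∀ π ∈ P,
      popLoss D π - popLoss D pistar - Δstar K ε δ P.card (disag D π pistar) T ≤
        tr.Lhat (T - 1) π - tr.Lhat (T - 1) pistar := by
  intro π hπ
  have hT' : 1 ≤ T - 1 := by omega
  obtain ⟨hE1, hE2⟩ := hE π hπ (T - 1) hT'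
  have hloss := htr.1
  have h1 : tr.Lemp (T-1) π ≤ tr.Ltilde (T-1) π := by
    unfold TrajData.Lemp TrajData.Ltilde
    apply mul_le_mul_of_nonneg_left _ (by positivity)
    apply Finset.sum_le_sum
    intro t _
    unfold TrajData.ltilde
    split_ifs
    · exact le_refl _
    · exact (hloss t _).2
  have h2 : tr.Ltilde (T-1) pistar = tr.Lemp (T-1) pistar := by
    unfold TrajData.Lemp TrajData.Ltilde
    congr 1
    apply Finset.sum_congr rfl
    intro t ht
    simp only [Finset.mem_Icc] at ht
    unfold TrajData.ltilde
    rw [if_pos (hexp t ht.1 ht.2)]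
  have hρ : 0 ≤ disag D π pistar := ENNReal.toReal_nonneg
  have hsq : Real.sqrt (2 * K * disag D π pistar * eBound P.card δ (T-1) / ε)
      ≤ Real.sqrt (2 * K / ε) * Real.sqrt (disag D π pistar * eBound P.card δ (T-1)) := by
    rw [show (2 * (K:ℝ) * disag D π pistar * eBound P.card δ (T-1) / ε)
        = (2 * K / ε) * (disag D π pistar * eBound P.card δ (T-1)) by ring,
      Real.sqrt_mul (div_nonneg (by positivity) hε.1.le)]
  have hnn : 0 ≤ Real.sqrt (disag D π pistar * eBound P.card δ (T-1)) := Real.sqrt_nonneg _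
  unfold Δstar
  linarith [(abs_le.mp hE1).1, (abs_le.mp hE2).1]

end CB
end
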